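/- arXiv:2304.07523 — 15 statements merged into one kernel-verified Lean document; each statement's English description precedes it below -/
import Mathlib

section
/- C(X)_P equals C(X), the ring of continuous real-valued functions on X, if and only if every member of P consists only of isolated points of X. -/
open Set Topology Filter

theorem stmt1 {X : Type*} [TopologicalSpace X] [T1Space X]
    (P : Set (Set X))
    (hPc : ∀ A ∈ P, IsClosed A)
    (hPu : ∀ A ∈ P, ∀ B ∈ P, A ∪ B ∈ P)
    (hPs : ∀ A ∈ P, ∀ B ⊆ A, IsClosed B → B ∈ P)
    (hPe : (∅ : Set X) ∈ P)
    :
    {f : X → ℝ | closure {x | ¬ ContinuousAt f x} ∈ P} = {f : X → ℝ | Continuous f} ↔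
      ∀ A ∈ P, ∀ x ∈ A, IsOpen ({x} : Set X) := by
  constructor
  · intro h A hA x hx
    by_contra hop
    -- consider the indicator function of {x}
    set f : X → ℝ := Set.indicator {x} (fun _ => 1) with hf
    have hne : (𝓝[≠] x).NeBot := by
      rw [neBot_iff]
      intro hb
      exact hop ((isOpen_singleton_iff_punctured_nhds x).2 hb)
    have hdisc : ¬ ContinuousAt f x := by
      intro hc
      have hfx : f x = 1 := by simp [hf]
      have h1 : ∀ᶠ y in 𝓝 x, f y > 1/2 := by
        have := continuousAt_const.eventually_lt hc (by rw [hfx]; norm_num : (1:ℝ)/2 < f x)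
        simpa using this
      have h2 : ∀ᶠ y in 𝓝[≠] x, f y > 1/2 := nhdsWithin_le_nhds h1
      have h3 : ∀ᶠ y in 𝓝[≠] x, f y = 0 := by
        filter_upwards [self_mem_nhdsWithin] with y hy
        exact Set.indicator_of_notMem hy _
      rcases (h2.and h3).exists with ⟨y, hy1, hy2⟩
      rw [hy2] at hy1; norm_num at hy1
    have hcont : ∀ y, y ≠ x → ContinuousAt f y := by
      intro y hy
      have : f =ᶠ[𝓝 y] (fun _ => (0:ℝ)) := by
        filter_upwards [IsOpen.mem_nhds isClosed_singleton.isOpen_compl hy] with z hz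
        exact Set.indicator_of_notMem hz _
      exact (continuousAt_const).congr this.symm
    have hD : {y | ¬ ContinuousAt f y} = {x} := by
      ext y
      simp only [Set.mem_setOf_eq, Set.mem_singleton_iff]
      constructor
      · intro hy; by_contra h'; exact hy (hcont y h')
      · rintro rfl; exact hdisc
    have hmem : f ∈ {f : X → ℝ | closure {x | ¬ ContinuousAt f x} ∈ P} := by
      simp only [Set.mem_setOf_eq, hD, closure_singleton]
      exact hPs A hA {x} (Set.singleton_subset_iff.2 hx) isClosed_singleton
    rw [h] at hmem
    exact hdisc hmem.continuousAt
  · intro h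
    ext f
    simp only [Set.mem_setOf_eq]
    constructor
    · intro hf
      rw [continuous_iff_continuousAt]
      intro x
      by_contra hx
      have hx' : x ∈ closure {x | ¬ ContinuousAt f x} := subset_closure hx
      have hop := h _ hf x hx'
      -- at an isolated point every function is continuous
      have : 𝓝 x = pure x := (isOpen_singleton_iff_nhds_eq_pure x).1 hop
      exact hx (by rw [ContinuousAt, this]; exact tendsto_pure_nhds f x)
    · intro hf
      have : {x | ¬ ContinuousAt f x} = ∅ := by
        ext x; simp [hf.continuousAt]
      rw [this, closure_empty]
      exact hPe
end

section
/- When P is the ideal of closed nowhere dense subsets of X, C(X)_P equals T'(X), the set of real-valued functions f on X for which there exists a dense open subset D of X with f restricted to D continuous. -/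
open Set Topology Filter

theorem stmt2 {X : Type*} [TopologicalSpace X] [T1Space X] :
    {f : X → ℝ | IsNowhereDense (closure {x | ¬ ContinuousAt f x})} =
      {f : X → ℝ | ∃ D : Set X, IsOpen D ∧ Dense D ∧ ContinuousOn f D} := by
  ext f
  simp only [mem_setOf_eq]
  constructor
  · intro h
    refine ⟨(closure {x | ¬ ContinuousAt f x})ᶜ, isClosed_closure.isOpen_compl, ?_, ?_⟩
    · rw [IsNowhereDense, closure_closure] at h
      exact interior_eq_empty_iff_dense_compl.1 h
    · intro x hx
      have : ContinuousAt f x := by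
        by_contra hc
        exact hx (subset_closure hc)
      exact this.continuousWithinAt
  · rintro ⟨D, hDo, hDd, hDc⟩
    have hsub : {x | ¬ ContinuousAt f x} ⊆ Dᶜ := by
      intro x hx hxD
      exact hx (hDc.continuousAt (hDo.mem_nhds hxD))
    have hclos : closure {x | ¬ ContinuousAt f x} ⊆ Dᶜ :=
      closure_minimal hsub hDo.isClosed_compl
    rw [IsNowhereDense, closure_closure]
    have : interior (closure {x | ¬ ContinuousAt f x}) ⊆ interior Dᶜ :=
      interior_mono hclos
    rw [interior_compl, hDd.closure_eq, compl_univ] at this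
    exact eq_empty_iff_forall_notMem.2 fun x hx => this hx
end

section
/- Every zero set Z(f) = {x ∈ X : f(x) = 0} of a function f ∈ C(X)_P can be written as a disjoint union of a Gδ-set and a set A whose closure belongs to P. -/
open Set Topology Filter

theorem stmt3 {X : Type*} [TopologicalSpace X] [T1Space X]
    (P : Set (Set X))
    (hPc : ∀ A ∈ P, IsClosed A)
    (hPu : ∀ A ∈ P, ∀ B ∈ P, A ∪ B ∈ P)
    (hPs : ∀ A ∈ P, ∀ B ⊆ A, IsClosed B → B ∈ P)
    (hPe : (∅ : Set X) ∈ P)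
    (f : X → ℝ) (hf : closure {x | ¬ ContinuousAt f x} ∈ P) :
    ∃ G A : Set X, IsGδ G ∧ closure A ∈ P ∧ Disjoint G A ∧
      {x | f x = 0} = G ∪ A := by
  set D := closure {x | ¬ ContinuousAt f x} with hD
  have hDc : IsClosed D := isClosed_closure
  refine ⟨{x | f x = 0} \ D, {x | f x = 0} ∩ D, ?_, ?_, ?_, ?_⟩
  · -- Gδ
    have hEq : {x | f x = 0} \ D = ⋂ n : ℕ, {x | x ∉ D ∧ |f x| < 1 / (n + 1)} := by
      ext x
      simp only [mem_diff, mem_setOf_eq, mem_iInter]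
      constructor
      · rintro ⟨hfx, hxD⟩ n
        refine ⟨hxD, ?_⟩
        rw [hfx]
        simp
        positivity
      · intro h
        refine ⟨?_, (h 0).1⟩
        by_contra hne
        have habs : 0 < |f x| := abs_pos.mpr hne
        obtain ⟨n, hn⟩ := exists_nat_one_div_lt habs
        exact absurd (h n).2 (not_lt.mpr hn.le)
    rw [hEq]
    refine .iInter_of_isOpen fun n => ?_
    rw [isOpen_iff_mem_nhds]
    rintro x ⟨hxD, hx⟩
    have hcont : ContinuousAt f x := by
      by_contra hc
      exact hxD (subset_closure hc)
    have h1 : {y | |f y| < 1 / (n + 1)} ∈ 𝓝 x := by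
      have : ContinuousAt (fun y => |f y|) x := hcont.abs
      exact this.preimage_mem_nhds (Iio_mem_nhds hx)
    have h2 : Dᶜ ∈ 𝓝 x := hDc.isOpen_compl.mem_nhds hxD
    filter_upwards [h1, h2] with y hy1 hy2 using ⟨hy2, hy1⟩
  · exact hPs D hf _ (closure_minimal inter_subset_right hDc) isClosed_closure
  · exact disjoint_left.mpr fun x hx hx' => hx.2 hx'.2
  · rw [diff_union_inter]
end

section
/- All zero sets of functions in C(X)_P are closed in X if and only if C(X)_P = C(X). -/
open Set Topology Filter

theorem stmt4 {X : Type*} [TopologicalSpace X] [T1Space X]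
    (P : Set (Set X))
    (hPc : ∀ A ∈ P, IsClosed A)
    (hPu : ∀ A ∈ P, ∀ B ∈ P, A ∪ B ∈ P)
    (hPs : ∀ A ∈ P, ∀ B ⊆ A, IsClosed B → B ∈ P)
    (hPe : (∅ : Set X) ∈ P)
    :
    (∀ f : X → ℝ, closure {x | ¬ ContinuousAt f x} ∈ P → IsClosed {x | f x = 0}) ↔
      {f : X → ℝ | closure {x | ¬ ContinuousAt f x} ∈ P} = {f : X → ℝ | Continuous f} := by
  constructor
  · intro h
    ext f
    simp only [Set.mem_setOf_eq]
    constructor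
    · intro hf
      rw [continuous_iff_continuousAt]
      intro p
      by_contra hp
      rw [ContinuousAt, Metric.tendsto_nhds] at hp
      push_neg at hp
      obtain ⟨ε, hε, hfreq⟩ := hp
      replace hfreq : ∃ᶠ x in 𝓝 p, ¬ dist (f x) (f p) < ε := hfreq.mono fun x hx => not_lt.mpr hx
      set g : X → ℝ := fun x => max (ε - |f x - f p|) 0 with hgdef
      have houter : Continuous fun t : ℝ => max (ε - |t - f p|) 0 := by
        fun_prop
      have hsub : {x | ¬ ContinuousAt g x} ⊆ {x | ¬ ContinuousAt f x} := by
        intro x hx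
        simp only [Set.mem_setOf_eq] at hx ⊢
        intro hfx
        exact hx (houter.continuousAt.comp hfx)
      have hgD : closure {x | ¬ ContinuousAt g x} ∈ P :=
        hPs _ hf _ (closure_mono hsub) isClosed_closure
      have hZ := h g hgD
      have hpmem : p ∈ closure {x | g x = 0} := by
        rw [mem_closure_iff_frequently]
        refine hfreq.mono fun x hx => ?_
        have hx' : ε ≤ |f x - f p| := by
          rw [Real.dist_eq] at hx
          linarith [not_lt.mp hx]
        simp only [Set.mem_setOf_eq, hgdef]
        exact max_eq_right (by linarith)
      rw [hZ.closure_eq] at hpmem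
      simp only [Set.mem_setOf_eq, hgdef, sub_self, abs_zero, sub_zero] at hpmem
      have : ε ≤ 0 := by
        rcases max_choice (ε - (0:ℝ)) 0 with hc | hc <;> simp_all <;> linarith
      linarith
    · intro hf
      have : {x | ¬ ContinuousAt f x} = ∅ := by
        ext x; simp [hf.continuousAt]
      rw [this, closure_empty]
      exact hPe
  · intro h f hf
    have hc : Continuous f := by
      have : f ∈ {f : X → ℝ | Continuous f} := h ▸ hf
      exact this
    exact isClosed_eq hc continuous_const
end

section
/- An element f of C(X)_P is a unit (multiplicatively invertible in C(X)_P) if and only if its zero set Z(f) = {x : f(x)=0} is empty. -/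
open Set Topology Filter

theorem stmt6 {X : Type*} [TopologicalSpace X] [T1Space X]
    (P : Set (Set X))
    (hPc : ∀ A ∈ P, IsClosed A)
    (hPu : ∀ A ∈ P, ∀ B ∈ P, A ∪ B ∈ P)
    (hPs : ∀ A ∈ P, ∀ B ⊆ A, IsClosed B → B ∈ P)
    (hPe : (∅ : Set X) ∈ P)
    (f : X → ℝ) (hf : f ∈ {f : X → ℝ | closure {x | ¬ ContinuousAt f x} ∈ P}) :
    (∃ g ∈ {f : X → ℝ | closure {x | ¬ ContinuousAt f x} ∈ P}, f * g = 1) ↔ ∀ x : X, f x ≠ 0 := by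
  constructor
  · rintro ⟨g, -, hfg⟩ x hx
    have := congrFun hfg x
    simp [hx] at this
  · intro hx
    refine ⟨fun x => (f x)⁻¹, ?_, ?_⟩
    · refine hPs _ hf _ ?_ isClosed_closure
      apply closure_mono
      intro x hxd
      simp only [mem_setOf_eq] at hxd ⊢
      intro hc
      exact hxd (hc.inv₀ (hx x))
    · funext x
      exact mul_inv_cancel₀ (hx x)
end

section
/- Two disjoint subsets A and B of X are P-completely separated if and only if they are contained in disjoint zero sets of functions in C(X)_P. -/
open Set Topology Filter

theorem stmt7 {X : Type*} [TopologicalSpace X] [T1Space X]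
    (P : Set (Set X))
    (hPc : ∀ A ∈ P, IsClosed A)
    (hPu : ∀ A ∈ P, ∀ B ∈ P, A ∪ B ∈ P)
    (hPs : ∀ A ∈ P, ∀ B ⊆ A, IsClosed B → B ∈ P)
    (hPe : (∅ : Set X) ∈ P)
    (A B : Set X) (hAB : Disjoint A B) :
    (∃ f ∈ {f : X → ℝ | closure {x | ¬ ContinuousAt f x} ∈ P}, (∀ x : X, f x ∈ Icc (0 : ℝ) 1) ∧
        (∀ x ∈ A, f x = 0) ∧ (∀ x ∈ B, f x = 1)) ↔
      (∃ g ∈ {f : X → ℝ | closure {x | ¬ ContinuousAt f x} ∈ P}, ∃ h ∈ {f : X → ℝ | closure {x | ¬ ContinuousAt f x} ∈ P},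
        A ⊆ {x | g x = 0} ∧ B ⊆ {x | h x = 0} ∧
        Disjoint {x | g x = 0} {x | h x = 0}) := by
  constructor
  · rintro ⟨f, hf, hrange, hA, hB⟩
    refine ⟨f, hf, fun x => f x - 1, ?_, ?_, ?_, ?_⟩
    · have : {x | ¬ ContinuousAt (fun x => f x - 1) x} = {x | ¬ ContinuousAt f x} := by
        ext x
        simp only [mem_setOf_eq]
        constructor
        · intro h hc
          exact h (hc.sub continuousAt_const)
        · intro h hc
          have : ContinuousAt (fun x => (f x - 1) + 1) x := hc.add continuousAt_const
          simp only [sub_add_cancel] at this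
          exact h this
      rw [mem_setOf_eq, this]
      exact hf
    · intro x hx; simpa using hA x hx
    · intro x hx; simp [hB x hx]
    · rw [Set.disjoint_left]
      intro x hx hx'
      simp only [mem_setOf_eq] at hx hx'
      rw [hx] at hx'
      norm_num at hx'
  · rintro ⟨g, hg, h, hh, hAg, hBh, hgh⟩
    set f : X → ℝ := fun x => |g x| / (|g x| + |h x|) with hfdef
    have hden : ∀ x, 0 < |g x| + |h x| := by
      intro x
      rcases eq_or_ne (g x) 0 with h0 | h0
      · have : h x ≠ 0 := by
          intro hh0
          exact Set.disjoint_left.mp hgh h0 hh0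
        have := abs_pos.mpr this
        rw [h0]; simpa using this
      · have := abs_pos.mpr h0
        have h2 : (0:ℝ) ≤ |h x| := abs_nonneg _
        linarith
    refine ⟨f, ?_, ?_, ?_, ?_⟩
    · have hsub : {x | ¬ ContinuousAt f x} ⊆ {x | ¬ ContinuousAt g x} ∪ {x | ¬ ContinuousAt h x} := by
        intro x hx
        by_contra hcon
        simp only [mem_union, mem_setOf_eq, not_or, not_not] at hcon
        obtain ⟨hgc, hhc⟩ := hcon
        apply hx
        exact (hgc.abs).div ((hgc.abs).add (hhc.abs)) (hden x).ne'
      have hclos : closure {x | ¬ ContinuousAt f x} ⊆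
          closure {x | ¬ ContinuousAt g x} ∪ closure {x | ¬ ContinuousAt h x} := by
        calc closure {x | ¬ ContinuousAt f x}
            ⊆ closure ({x | ¬ ContinuousAt g x} ∪ {x | ¬ ContinuousAt h x}) := closure_mono hsub
          _ = _ := closure_union
      have hmem := hPu _ hg _ hh
      exact hPs _ hmem _ hclos isClosed_closure
    · intro x
      constructor
      · exact div_nonneg (abs_nonneg _) (hden x).le
      · rw [div_le_one (hden x)]
        have := abs_nonneg (h x); linarith
    · intro x hx
      have : g x = 0 := hAg hx
      simp [hfdef, this]
    · intro x hx
      have h0 : h x = 0 := hBh hx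
      have hg0 : g x ≠ 0 := fun hc => Set.disjoint_left.mp hgh hc h0
      have := abs_pos.mpr hg0
      simp only [hfdef, h0, abs_zero, add_zero]
      exact div_self this.ne'
end

section
/- If the set of all non-isolated points of X belongs to P, then C(X)_P = ℝ^X, the ring of all real-valued functions on X; in particular C(X)_P is closed under uniform limits. -/
open Set Topology Filter

theorem stmt11 {X : Type*} [TopologicalSpace X] [T1Space X]
    (P : Set (Set X))
    (hPc : ∀ A ∈ P, IsClosed A)
    (hPu : ∀ A ∈ P, ∀ B ∈ P, A ∪ B ∈ P)
    (hPs : ∀ A ∈ P, ∀ B ⊆ A, IsClosed B → B ∈ P)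
    (hPe : (∅ : Set X) ∈ P)
    (hni : {x : X | ¬ IsOpen ({x} : Set X)} ∈ P) :
    {f : X → ℝ | closure {x | ¬ ContinuousAt f x} ∈ P} = (Set.univ : Set (X → ℝ)) ∧
    (∀ (u : ℕ → X → ℝ) (f : X → ℝ), (∀ n, u n ∈ {f : X → ℝ | closure {x | ¬ ContinuousAt f x} ∈ P}) →
      TendstoUniformly u f atTop → f ∈ {f : X → ℝ | closure {x | ¬ ContinuousAt f x} ∈ P}) := by
  have key : ∀ f : X → ℝ, closure {x | ¬ ContinuousAt f x} ∈ P := by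
    intro f
    apply hPs _ hni _ _ isClosed_closure
    have hsub : {x | ¬ ContinuousAt f x} ⊆ {x : X | ¬ IsOpen ({x} : Set X)} := by
      intro x hx
      intro hop
      apply hx
      unfold ContinuousAt
      rw [isOpen_singleton_iff_nhds_eq_pure] at hop
      rw [hop]
      exact tendsto_pure_nhds f x
    exact closure_minimal hsub (hPc _ hni)
  exact ⟨Set.eq_univ_of_forall (fun f => key f), fun u f _ _ => key f⟩
end

section
/- Let X be a metrizable space and P the ideal of closed compact subsets of X. If C(X)_P is closed under uniform limits of sequences, then the set of non-isolated points of X is compact. -/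
open Set Topology Filter

theorem stmt12 {X : Type*} [TopologicalSpace X] [T1Space X] [TopologicalSpace.MetrizableSpace X]
    (hU : ∀ (u : ℕ → X → ℝ) (f : X → ℝ),
      (∀ n, IsCompact (closure {x | ¬ ContinuousAt (u n) x})) →
      TendstoUniformly u f atTop →
      IsCompact (closure {x | ¬ ContinuousAt f x})) :
    IsCompact {x : X | ¬ IsOpen ({x} : Set X)} := by
  classical
  letI : MetricSpace X := TopologicalSpace.metrizableSpaceMetric X
  have hAclosed : IsClosed {x : X | ¬ IsOpen ({x} : Set X)} := by
    rw [← isOpen_compl_iff, isOpen_iff_mem_nhds]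
    intro a ha
    simp only [mem_compl_iff, mem_setOf_eq, not_not] at ha
    refine Filter.mem_of_superset (ha.mem_nhds rfl) ?_
    intro b hb
    rw [mem_singleton_iff] at hb
    subst hb
    simpa using ha
  suffices h : IsSeqCompact {x : X | ¬ IsOpen ({x} : Set X)} from h.isCompact
  intro x hx
  by_contra hcon
  push_neg at hcon
  -- no cluster points
  have hnoclus : ∀ a : X, ¬ MapClusterPt a atTop x := by
    intro a ha
    obtain ⟨φ, hφ, hten⟩ := TopologicalSpace.FirstCountableTopology.tendsto_subseq ha
    have haA : a ∈ {x : X | ¬ IsOpen ({x} : Set X)} :=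
      hAclosed.mem_of_tendsto hten (Eventually.of_forall fun n => hx _)
    exact hcon a haA φ hφ hten
  -- for every point, a neighborhood hit by only finitely many terms
  have hfin : ∀ a : X, ∃ U ∈ 𝓝 a, {n : ℕ | x n ∈ U}.Finite := by
    intro a
    have h := hnoclus a
    rw [MapClusterPt, clusterPt_iff_not_disjoint, not_not, Filter.disjoint_iff] at h
    obtain ⟨U, hU, V, hV, hUV⟩ := h
    refine ⟨U, hU, ?_⟩
    rw [mem_map, mem_atTop_sets] at hV
    obtain ⟨N, hN⟩ := hV
    refine (Set.finite_Iio N).subset fun n hn => ?_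
    by_contra hn'
    simp only [mem_Iio, not_lt] at hn'
    exact absurd (hUV.le_bot ⟨hn, hN n hn'⟩) (by simp)
  -- the function series
  set g : ℕ → X → ℝ := fun n y => if x n = y then (1 / 2 : ℝ) ^ n else 0 with hg
  have hgnonneg : ∀ n y, 0 ≤ g n y := by
    intro n y; simp only [hg]; split <;> positivity
  have hgle : ∀ n y, ‖g n y‖ ≤ (1 / 2 : ℝ) ^ n := by
    intro n y
    rw [Real.norm_eq_abs, abs_of_nonneg (hgnonneg n y)]
    simp only [hg]
    split
    · exact le_refl _
    · positivity
  have hsum : ∀ y, Summable fun n => g n y := fun y =>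
    Summable.of_nonneg_of_le (hgnonneg · y)
      (fun n => by
        have := hgle n y
        rwa [Real.norm_eq_abs, abs_of_nonneg (hgnonneg n y)] at this)
      summable_geometric_two
  set F : X → ℝ := fun y => ∑' n, g n y with hF
  set u : ℕ → X → ℝ := fun N y => ∑ n ∈ Finset.range N, g n y with hu'
  have htu : TendstoUniformly u F atTop := tendstoUniformly_tsum_nat summable_geometric_two hgle
  -- each partial sum has compact closure of discontinuity set
  have hcompu : ∀ N, IsCompact (closure {y | ¬ ContinuousAt (u N) y}) := by
    intro N
    have hT : (x '' {n | n < N}).Finite := (Set.finite_Iio N).image x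
    have hsub : {y | ¬ ContinuousAt (u N) y} ⊆ x '' {n | n < N} := by
      intro y hy
      by_contra hyT
      apply hy
      have hop : IsOpen (x '' {n | n < N})ᶜ := hT.isClosed.isOpen_compl
      have hev : u N =ᶠ[𝓝 y] fun _ => (0 : ℝ) := by
        filter_upwards [hop.mem_nhds hyT] with z hz
        apply Finset.sum_eq_zero
        intro n hn
        simp only [hg]
        rw [if_neg]
        intro hxz
        exact hz ⟨n, Finset.mem_range.mp hn, hxz⟩
      exact (continuousAt_const (y := (0 : ℝ))).congr hev.symm
    exact (hT.isCompact).of_isClosed_subset isClosed_closure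
      (closure_minimal hsub hT.isClosed)
  -- every x m is a discontinuity point of F
  have hdisc : ∀ m, ¬ ContinuousAt F (x m) := by
    intro m hc
    obtain ⟨U, hUm, hUfin⟩ := hfin (x m)
    set T : Set X := (x '' {n | x n ∈ U}) \ {x m} with hT
    have hTfin : T.Finite := (hUfin.image x).diff
    set W : Set X := interior U ∩ Tᶜ with hW
    have hWopen : IsOpen W := isOpen_interior.inter hTfin.isClosed.isOpen_compl
    have hmW : x m ∈ W := ⟨mem_interior_iff_mem_nhds.mpr hUm, fun h => h.2 rfl⟩
    have hF0 : ∀ y ∈ W, y ≠ x m → F y = 0 := by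
      intro y hyW hyne
      have : (fun n => g n y) = fun _ => (0 : ℝ) := by
        funext n
        simp only [hg]
        rw [if_neg]
        intro hxy
        have hyU : y ∈ U := interior_subset hyW.1
        exact hyW.2 ⟨⟨n, by rwa [mem_setOf_eq, hxy], hxy⟩, by simpa [hxy] using hyne⟩
      simp only [hF, this, tsum_zero]
    have hFm : (1 / 2 : ℝ) ^ m ≤ F (x m) := by
      have := Summable.le_tsum (hsum (x m)) m (fun n _ => hgnonneg n (x m))
      simpa only [hg, if_pos rfl] using this
    have hFnn : 0 ≤ F (x m) := tsum_nonneg fun n => hgnonneg n (x m)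
    have hev : ∀ᶠ y in 𝓝 (x m), dist (F y) (F (x m)) < (1 / 2) ^ m :=
      Metric.tendsto_nhds.mp hc _ (by positivity)
    have hne : (𝓝[≠] (x m)).NeBot := by
      refine neBot_iff.mpr fun h => ?_
      exact hx m ((isOpen_singleton_iff_punctured_nhds (x m)).mpr h)
    have hev' : ∀ᶠ y in 𝓝[≠] (x m), dist (F y) (F (x m)) < (1 / 2) ^ m ∧ y ∈ W :=
      nhdsWithin_le_nhds (hev.and (hWopen.mem_nhds hmW))
    obtain ⟨y, ⟨hyd, hyW⟩, hyne⟩ := (hev'.and self_mem_nhdsWithin).exists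
    rw [hF0 y hyW hyne, Real.dist_eq, zero_sub, abs_neg, abs_of_nonneg hFnn] at hyd
    linarith
  -- conclude: the sequence lives in a compact set, so it has a cluster point
  have hK : IsCompact (closure {y | ¬ ContinuousAt F y}) := hU u F hcompu htu
  have hle : Filter.map x atTop ≤ 𝓟 (closure {y | ¬ ContinuousAt F y}) :=
    le_principal_iff.mpr (mem_map.mpr (Eventually.of_forall fun n =>
      subset_closure (hdisc n)))
  obtain ⟨a, -, hcl⟩ := hK.exists_clusterPt hle
  exact hnoclus a hcl
end

section
/- If there is a ring isomorphism from C(X)_P onto C(Y) for some topological space Y, then C(X)_P is closed under uniform limits of sequences. -/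
open Set Topology Filter

theorem stmt13 {X Y : Type*} [TopologicalSpace X] [T1Space X] [TopologicalSpace Y]
    (P : Set (Set X))
    (hPc : ∀ A ∈ P, IsClosed A)
    (hPu : ∀ A ∈ P, ∀ B ∈ P, A ∪ B ∈ P)
    (hPs : ∀ A ∈ P, ∀ B ⊆ A, IsClosed B → B ∈ P)
    (hPe : (∅ : Set X) ∈ P)
    (S : Subring (X → ℝ))
    (hS : ∀ f : X → ℝ, f ∈ S ↔ closure {x | ¬ ContinuousAt f x} ∈ P)
    (e : S ≃+* C(Y, ℝ)) :
    ∀ (u : ℕ → X → ℝ) (f : X → ℝ), (∀ n, u n ∈ S) →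
      TendstoUniformly u f atTop → f ∈ S := by
  intro u f hu huf
  -- nonneg elements of S are squares
  have sqrtS : ∀ a : S, (∀ x, 0 ≤ (a : X → ℝ) x) → ∃ t : S, t * t = a := by
    intro a ha
    have hmem : (fun x => Real.sqrt ((a : X → ℝ) x)) ∈ S := by
      rw [hS]
      refine hPs _ ((hS _).mp a.2) _ ?_ isClosed_closure
      refine closure_mono ?_
      intro x hx
      simp only [mem_setOf_eq] at hx ⊢
      intro hc
      exact hx (Real.continuous_sqrt.continuousAt.comp hc)
    refine ⟨⟨_, hmem⟩, ?_⟩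
    ext x
    push_cast
    exact Real.mul_self_sqrt (ha x)
  -- e preserves order
  have hE : ∀ a b : S, (∀ x, (a : X → ℝ) x ≤ (b : X → ℝ) x) → ∀ y, e a y ≤ e b y := by
    intro a b hab y
    obtain ⟨t, ht⟩ := sqrtS (b - a) (by
      intro x
      push_cast
      simp only [Pi.sub_apply]
      linarith [hab x])
    have h2 : e b - e a = e t * e t := by
      rw [← map_mul, ht, map_sub]
    have h3 := congrArg (fun F : C(Y, ℝ) => F y) h2
    simp only [ContinuousMap.sub_apply, ContinuousMap.mul_apply] at h3
    nlinarith [mul_self_nonneg (e t y)]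
  -- e.symm preserves order
  have hEs : ∀ F G : C(Y, ℝ), (∀ y, F y ≤ G y) → ∀ x, (e.symm F : X → ℝ) x ≤ (e.symm G : X → ℝ) x := by
    intro F G hFG x
    have hcont : Continuous fun y => Real.sqrt ((G - F) y) :=
      Real.continuous_sqrt.comp (G - F).continuous
    set t : C(Y, ℝ) := ⟨_, hcont⟩ with ht
    have htt : t * t = G - F := by
      ext y
      exact Real.mul_self_sqrt (by simpa using hFG y)
    have h2 : e.symm G - e.symm F = e.symm t * e.symm t := by
      rw [← map_mul, htt, map_sub]
    have h3 := congrArg (fun a : S => (a : X → ℝ) x) h2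
    push_cast at h3
    simp only [Pi.sub_apply, Pi.mul_apply] at h3
    nlinarith [mul_self_nonneg ((e.symm t : X → ℝ) x)]
  -- transfer of uniform bounds forward
  have trans1 : ∀ (a : S) (k : ℕ), (∀ x, |(a : X → ℝ) x| ≤ 1 / (k + 1)) →
      ∀ y, |e a y| ≤ 1 / (k + 1) := by
    intro a k ha y
    have hk : (0:ℝ) < (k : ℝ) + 1 := by positivity
    have hinv : ((k:ℝ) + 1) * (1 / ((k:ℝ) + 1)) = 1 := by field_simp
    set b : S := ((k + 1 : ℕ) : S) * a with hb
    have hbx : ∀ x, (b : X → ℝ) x = ((k:ℝ) + 1) * (a : X → ℝ) x := by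
      intro x
      rw [hb]
      push_cast
      simp only [Pi.mul_apply, Pi.add_apply, Pi.one_apply, Pi.natCast_apply]
    have h1 : ∀ y, e b y ≤ (1 : C(Y, ℝ)) y := by
      have := hE b 1 (fun x => by
        rw [hbx x]
        simp only [OneMemClass.coe_one, Pi.one_apply]
        have h := mul_le_mul_of_nonneg_left (abs_le.mp (ha x)).2 hk.le
        rw [hinv] at h
        exact h)
      simpa using this
    have h2 : ∀ y, (-1 : C(Y, ℝ)) y ≤ e b y := by
      have := hE (-1) b (fun x => by
        rw [hbx x]
        have h := mul_le_mul_of_nonneg_left (abs_le.mp (ha x)).1 hk.le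
        rw [mul_neg, hinv] at h
        push_cast
        simpa using h)
      have := fun y => this y
      simpa using this
    have hby : e b y = ((k:ℝ) + 1) * e a y := by
      rw [hb, map_mul, map_natCast]
      push_cast
      simp
    have h1y := h1 y
    have h2y := h2 y
    rw [hby] at h1y h2y
    simp only [ContinuousMap.one_apply, ContinuousMap.neg_apply] at h1y h2y
    have habs : ((k:ℝ) + 1) * |e a y| ≤ 1 := by
      rw [← abs_of_pos hk, ← abs_mul, abs_le]
      exact ⟨by linarith, by linarith⟩
    rw [le_div_iff₀ hk, mul_comm]
    exact habs
  -- transfer of uniform bounds backward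
  have trans2 : ∀ (F : C(Y, ℝ)) (k : ℕ), (∀ y, |F y| ≤ 1 / (k + 1)) →
      ∀ x, |(e.symm F : X → ℝ) x| ≤ 1 / (k + 1) := by
    intro F k hF x
    have hk : (0:ℝ) < (k : ℝ) + 1 := by positivity
    have hinv : ((k:ℝ) + 1) * (1 / ((k:ℝ) + 1)) = 1 := by field_simp
    set G : C(Y, ℝ) := ((k + 1 : ℕ) : C(Y, ℝ)) * F with hG
    have hGy : ∀ y, G y = ((k:ℝ) + 1) * F y := by
      intro y
      rw [hG]
      push_cast
      simp
    have h1 : ∀ x, (e.symm G : X → ℝ) x ≤ ((1 : S) : X → ℝ) x := by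
      have hh := hEs G 1 ?_
      · rw [map_one] at hh; exact hh
      intro y
      rw [hGy y]
      simp only [ContinuousMap.one_apply]
      have h := mul_le_mul_of_nonneg_left (abs_le.mp (hF y)).2 hk.le
      rw [hinv] at h
      exact h
    have h2 : ∀ x, ((-1 : S) : X → ℝ) x ≤ (e.symm G : X → ℝ) x := by
      have hh := hEs (-1) G ?_
      · rw [map_neg, map_one] at hh; exact hh
      intro y
      rw [hGy y]
      have h := mul_le_mul_of_nonneg_left (abs_le.mp (hF y)).1 hk.le
      rw [mul_neg, hinv] at h
      simpa using h
    have hGx : (e.symm G : X → ℝ) x = ((k:ℝ) + 1) * (e.symm F : X → ℝ) x := by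
      rw [hG, map_mul, map_natCast]
      push_cast
      simp only [Pi.mul_apply, Pi.add_apply, Pi.one_apply, Pi.natCast_apply]
    have h1x := h1 x
    have h2x := h2 x
    rw [hGx] at h1x h2x
    simp only [OneMemClass.coe_one, Pi.one_apply] at h1x
    have h2x' : (-1 : ℝ) ≤ ((k:ℝ) + 1) * (e.symm F : X → ℝ) x := by
      have : ((-1 : S) : X → ℝ) x = (-1 : ℝ) := by push_cast; simp
      linarith [h2x, this.symm.le, this.le]
    have habs : ((k:ℝ) + 1) * |(e.symm F : X → ℝ) x| ≤ 1 := by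
      rw [← abs_of_pos hk, ← abs_mul, abs_le]
      exact ⟨by linarith, by linarith⟩
    rw [le_div_iff₀ hk, mul_comm]
    exact habs
  -- the sequence in S and its image in C(Y,ℝ)
  set v : ℕ → S := fun n => ⟨u n, hu n⟩ with hv
  set E : ℕ → C(Y, ℝ) := fun n => e (v n) with hEdef
  -- u is uniformly Cauchy with explicit bounds
  have hC : ∀ k : ℕ, ∃ N, ∀ n ≥ N, ∀ m ≥ N, ∀ x, |u n x - u m x| ≤ 1 / (k + 1) := by
    intro k
    have hk : (0:ℝ) < 1 / (2 * ((k:ℝ) + 1)) := by positivity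
    have := (Metric.tendstoUniformly_iff.mp huf) _ hk
    obtain ⟨N, hN⟩ := this.exists_forall_of_atTop
    refine ⟨N, fun n hn m hm x => ?_⟩
    have h1 := hN n hn x
    have h2 := hN m hm x
    rw [Real.dist_eq] at h1 h2
    have h3 : |u n x - u m x| ≤ |f x - u n x| + |f x - u m x| := by
      rw [abs_sub_comm (f x) (u n x)]
      calc |u n x - u m x| = |(u n x - f x) + (f x - u m x)| := by ring_nf
        _ ≤ _ := abs_add_le _ _
    have key : 1 / (2 * ((k:ℝ) + 1)) + 1 / (2 * ((k:ℝ) + 1)) = 1 / ((k:ℝ) + 1) := by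
      have h11 : (1:ℝ) + 1 = 2 := by norm_num
      field_simp
      exact h11
    linarith
  -- transfer Cauchy to C(Y,ℝ)
  have hCY : ∀ k : ℕ, ∃ N, ∀ n ≥ N, ∀ m ≥ N, ∀ y, |E n y - E m y| ≤ 1 / (k + 1) := by
    intro k
    obtain ⟨N, hN⟩ := hC k
    refine ⟨N, fun n hn m hm y => ?_⟩
    have := trans1 (v n - v m) k (fun x => by push_cast; simpa using hN n hn m hm x) y
    rw [map_sub] at this
    simpa using this
  -- pointwise limit G₀ exists
  have hptC : ∀ y, ∃ l : ℝ, Tendsto (fun n => E n y) atTop (𝓝 l) := by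
    intro y
    refine cauchySeq_tendsto_of_complete ?_
    rw [Metric.cauchySeq_iff]
    intro ε hε
    obtain ⟨k, hk⟩ := exists_nat_one_div_lt hε
    obtain ⟨N, hN⟩ := hCY k
    refine ⟨N, fun n hn m hm => ?_⟩
    rw [Real.dist_eq]
    calc |E n y - E m y| ≤ 1 / (k + 1) := hN n hn m hm y
      _ < ε := hk
  choose G₀ hG₀ using hptC
  -- E n → G₀ with explicit uniform bounds
  have hEG : ∀ k : ℕ, ∃ N, ∀ n ≥ N, ∀ y, |E n y - G₀ y| ≤ 1 / (k + 1) := by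
    intro k
    obtain ⟨N, hN⟩ := hCY k
    refine ⟨N, fun n hn y => ?_⟩
    have hlim : Tendsto (fun m => E n y - E m y) atTop (𝓝 (E n y - G₀ y)) :=
      tendsto_const_nhds.sub (hG₀ y)
    refine le_of_tendsto (hlim.abs) ?_
    filter_upwards [eventually_ge_atTop N] with m hm
    exact hN n hn m hm y
  -- G₀ is continuous (uniform limit)
  have hGcont : Continuous G₀ := by
    have htu : TendstoUniformly (fun n y => E n y) G₀ atTop := by
      rw [Metric.tendstoUniformly_iff]
      intro ε hε
      obtain ⟨k, hk⟩ := exists_nat_one_div_lt hε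
      obtain ⟨N, hN⟩ := hEG k
      filter_upwards [eventually_ge_atTop N] with n hn y
      rw [Real.dist_eq, abs_sub_comm]
      exact lt_of_le_of_lt (hN n hn y) hk
    exact htu.continuous (Frequently.of_forall fun n => (E n).continuous)
  set G : C(Y, ℝ) := ⟨G₀, hGcont⟩ with hGdef
  set g : S := e.symm G with hg
  -- pull back: u n is uniformly close to g
  have hug : ∀ k : ℕ, ∃ N, ∀ n ≥ N, ∀ x, |u n x - (g : X → ℝ) x| ≤ 1 / (k + 1) := by
    intro k
    obtain ⟨N, hN⟩ := hEG k
    refine ⟨N, fun n hn x => ?_⟩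
    have := trans2 (E n - G) k (fun y => by simp only [ContinuousMap.sub_apply]; exact hN n hn y) x
    rw [map_sub] at this
    have hvn : e.symm (E n) = v n := e.symm_apply_apply (v n)
    rw [hvn] at this
    push_cast at this
    simpa using this
  -- conclude f = g pointwise
  have hfg : f = (g : X → ℝ) := by
    funext x
    have hux : Tendsto (fun n => u n x) atTop (𝓝 (f x)) :=
      (huf.tendsto_at x)
    have hbound : ∀ k : ℕ, |f x - (g : X → ℝ) x| ≤ 1 / (k + 1) := by
      intro k
      obtain ⟨N, hN⟩ := hug k
      have hlim : Tendsto (fun n => |u n x - (g : X → ℝ) x|) atTop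
          (𝓝 (|f x - (g : X → ℝ) x|)) :=
        ((hux.sub tendsto_const_nhds).abs)
      refine le_of_tendsto hlim ?_
      filter_upwards [eventually_ge_atTop N] with n hn
      exact hN n hn x
    have h0 : |f x - (g : X → ℝ) x| ≤ 0 := by
      by_contra h
      push_neg at h
      obtain ⟨k, hk⟩ := exists_nat_one_div_lt h
      exact absurd (hbound k) (not_le.mpr hk)
    have h1 := abs_nonneg (f x - (g : X → ℝ) x)
    have h2 := abs_eq_zero.mp (le_antisymm h0 h1)
    linarith
  rw [hfg]
  exact g.2
end

section
/- If X is τP-compact (every family of zero sets of functions in C(X)_P with the finite intersection property has nonempty intersection), then every f ∈ C(X)_P is bounded. -/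
open Set Topology Filter

theorem stmt14 {X : Type*} [TopologicalSpace X] [T1Space X]
    (P : Set (Set X))
    (hPc : ∀ A ∈ P, IsClosed A)
    (hPu : ∀ A ∈ P, ∀ B ∈ P, A ∪ B ∈ P)
    (hPs : ∀ A ∈ P, ∀ B ⊆ A, IsClosed B → B ∈ P)
    (hPe : (∅ : Set X) ∈ P)
    (hcomp : ∀ Z : Set (Set X),
      (∀ A ∈ Z, ∃ f ∈ {f : X → ℝ | closure {x | ¬ ContinuousAt f x} ∈ P}, A = {x | f x = 0}) →
      (∀ t ⊆ Z, t.Finite → (⋂₀ t).Nonempty) → (⋂₀ Z).Nonempty) :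
    ∀ f ∈ {f : X → ℝ | closure {x | ¬ ContinuousAt f x} ∈ P}, ∃ M : ℝ, ∀ x : X, |f x| ≤ M := by
  intro f hf
  by_contra h
  push_neg at h
  -- h : ∀ M, ∃ x, M < |f x|
  set g : ℕ → X → ℝ := fun n x => max ((n : ℝ) - |f x|) 0 with hg
  have hmem : ∀ (n : ℕ) (x : X), x ∈ {x | g n x = 0} ↔ (n : ℝ) ≤ |f x| := by
    intro n x
    simp only [mem_setOf_eq, hg, max_eq_right_iff, sub_nonpos]
  have hgc : ∀ n, closure {x | ¬ ContinuousAt (g n) x} ∈ P := by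
    intro n
    refine hPs _ hf _ ?_ isClosed_closure
    apply closure_mono
    intro x hx
    simp only [mem_setOf_eq] at hx ⊢
    intro hc
    exact hx ((continuousAt_const.sub hc.abs).max continuousAt_const)
  set Zs : ℕ → Set X := fun n => {x | g n x = 0} with hZs
  have hanti : ∀ m n : ℕ, m ≤ n → Zs n ⊆ Zs m := by
    intro m n hmn x hx
    rw [hZs, hmem] at hx ⊢
    exact le_trans (by exact_mod_cast hmn) hx
  have hne : ∀ n, (Zs n).Nonempty := by
    intro n
    obtain ⟨x, hx⟩ := h n
    exact ⟨x, (hmem n x).2 hx.le⟩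
  have key := hcomp (Set.range Zs) ?_ ?_
  · obtain ⟨x, hx⟩ := key
    obtain ⟨n, hn⟩ := exists_nat_gt (|f x|)
    have := (hmem n x).1 (hx (Zs n) ⟨n, rfl⟩)
    linarith
  · rintro A ⟨n, rfl⟩
    exact ⟨g n, hgc n, rfl⟩
  · intro t ht htfin
    have : ∃ N, Zs N ⊆ ⋂₀ t := by
      refine Set.Finite.induction_on_subset (motive := fun s _ => ∃ N, Zs N ⊆ ⋂₀ s) t htfin ⟨0, by simp⟩ ?_
      rintro A s hA hs hAs ⟨N, hN⟩
      obtain ⟨n, rfl⟩ := ht hA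
      refine ⟨max n N, ?_⟩
      rw [sInter_insert]
      exact subset_inter (hanti n _ (le_max_left _ _))
        (subset_trans (hanti N _ (le_max_right _ _)) hN)
    obtain ⟨N, hN⟩ := this
    exact (hne N).mono hN
end

section
/- Suppose P contains all singleton subsets of X. Then every non-unit element of C(X)_P is a zero divisor. -/
open Set Topology Filter

theorem stmt15 {X : Type*} [TopologicalSpace X] [T1Space X]
    (P : Set (Set X))
    (hPc : ∀ A ∈ P, IsClosed A)
    (hPu : ∀ A ∈ P, ∀ B ∈ P, A ∪ B ∈ P)
    (hPs : ∀ A ∈ P, ∀ B ⊆ A, IsClosed B → B ∈ P)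
    (hPe : (∅ : Set X) ∈ P)
    (hsingle : ∀ x : X, ({x} : Set X) ∈ P)
    (f : X → ℝ) (hf : f ∈ {f : X → ℝ | closure {x | ¬ ContinuousAt f x} ∈ P})
    (hnu : ¬ ∃ g ∈ {f : X → ℝ | closure {x | ¬ ContinuousAt f x} ∈ P}, f * g = 1) :
    ∃ g ∈ {f : X → ℝ | closure {x | ¬ ContinuousAt f x} ∈ P}, g ≠ 0 ∧ f * g = 0 := by
  classical
  -- First show f must vanish somewhere
  by_cases hz : ∃ x₀, f x₀ = 0
  · obtain ⟨x₀, hx₀⟩ := hz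
    refine ⟨fun x => if x = x₀ then 1 else 0, ?_, ?_, ?_⟩
    · -- membership in C(X)_P
      refine hPs {x₀} (hsingle x₀) _ ?_ isClosed_closure
      have hsub : {x | ¬ ContinuousAt (fun x => if x = x₀ then (1:ℝ) else 0) x} ⊆ {x₀} := by
        intro x hx
        by_contra hne
        apply hx
        have hev : (fun x => if x = x₀ then (1:ℝ) else 0) =ᶠ[𝓝 x] fun _ => (0:ℝ) := by
          filter_upwards [IsOpen.mem_nhds (isClosed_singleton (x := x₀)).isOpen_compl hne]
            with y hy
          simp [Set.mem_compl_iff, Set.mem_singleton_iff] at hy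
          simp [hy]
        exact continuousAt_const.congr hev.symm
      calc closure {x | ¬ ContinuousAt (fun x => if x = x₀ then (1:ℝ) else 0) x}
          ⊆ closure {x₀} := closure_mono hsub
        _ = {x₀} := closure_singleton
    · intro h
      have := congrFun h x₀
      simp at this
    · funext x
      by_cases hx : x = x₀ <;> simp [hx, hx₀]
  · -- f never zero: then f⁻¹ is in C(X)_P and f is a unit, contradiction
    push_neg at hz
    exfalso
    apply hnu
    refine ⟨fun x => (f x)⁻¹, ?_, ?_⟩
    · refine hPs _ hf _ ?_ isClosed_closure
      refine closure_mono fun x hx => ?_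
      intro hc
      exact hx (hc.inv₀ (hz x))
    · funext x
      simp [mul_inv_cancel₀ (hz x)]
end

section
/- Suppose P contains all singleton subsets of X. Then C(X)_P = C(X) if and only if X is discrete. -/
open Set Topology Filter

theorem stmt16 {X : Type*} [TopologicalSpace X] [T1Space X]
    (P : Set (Set X))
    (hPc : ∀ A ∈ P, IsClosed A)
    (hPu : ∀ A ∈ P, ∀ B ∈ P, A ∪ B ∈ P)
    (hPs : ∀ A ∈ P, ∀ B ⊆ A, IsClosed B → B ∈ P)
    (hPe : (∅ : Set X) ∈ P)
    (hsingle : ∀ x : X, ({x} : Set X) ∈ P) :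
    {f : X → ℝ | closure {x | ¬ ContinuousAt f x} ∈ P} = {f : X → ℝ | Continuous f} ↔ DiscreteTopology X := by
  constructor
  · intro h
    rw [discreteTopology_iff_isOpen_singleton]
    intro x
    by_contra hx
    set f : X → ℝ := Set.indicator {x} 1 with hf
    -- f is continuous at every y ≠ x
    have hcont : ∀ y : X, y ≠ x → ContinuousAt f y := by
      intro y hy
      have hopen : IsOpen ({x}ᶜ : Set X) := isClosed_singleton.isOpen_compl
      have hmem : ({x}ᶜ : Set X) ∈ 𝓝 y := hopen.mem_nhds (by simpa using hy)
      have heq : f =ᶠ[𝓝 y] fun _ => (0 : ℝ) := by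
        filter_upwards [hmem] with z hz
        exact Set.indicator_of_notMem hz _
      exact (continuousAt_const (y := (0:ℝ))).congr heq.symm
    -- f is not continuous at x
    have hnot : ¬ ContinuousAt f x := by
      intro hc
      have h1 : f x = 1 := by simp [hf]
      have hmem : f ⁻¹' (Set.Ioi (1/2 : ℝ)) ∈ 𝓝 x := by
        apply hc.preimage_mem_nhds
        rw [h1]
        exact Ioi_mem_nhds (by norm_num)
      have hpre : f ⁻¹' (Set.Ioi (1/2 : ℝ)) = {x} := by
        ext z
        by_cases hz : z = x
        · subst hz
          have h1' : f z = 1 := Set.indicator_of_mem (Set.mem_singleton z) _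
          simp only [Set.mem_preimage, Set.mem_Ioi, Set.mem_singleton_iff, h1']
          norm_num
        · have h0 : f z = 0 := Set.indicator_of_notMem (by simpa using hz) _
          simp only [Set.mem_preimage, Set.mem_Ioi, Set.mem_singleton_iff, hz, iff_false, h0,
            not_lt]
          norm_num
      rw [hpre] at hmem
      rcases mem_nhds_iff.mp hmem with ⟨t, hts, hto, hxt⟩
      have : t = {x} := Set.Subset.antisymm hts (by simpa using hxt)
      exact hx (this ▸ hto)
    -- D_f ⊆ {x}
    have hD : {y | ¬ ContinuousAt f y} ⊆ {x} := by
      intro y hy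
      by_contra hy'
      exact hy (hcont y (by simpa using hy'))
    have hclo : closure {y | ¬ ContinuousAt f y} ⊆ {x} :=
      closure_minimal hD isClosed_singleton
    have hmemP : closure {y | ¬ ContinuousAt f y} ∈ P :=
      hPs _ (hsingle x) _ hclo isClosed_closure
    have : Continuous f := by
      have hfmem : f ∈ {f : X → ℝ | closure {x | ¬ ContinuousAt f x} ∈ P} := hmemP
      rw [h] at hfmem
      exact hfmem
    exact hnot this.continuousAt
  · intro h
    ext f
    simp only [Set.mem_setOf_eq]
    constructor
    · intro _
      exact continuous_of_discreteTopology
    · intro hf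
      have : {x | ¬ ContinuousAt f x} = ∅ := by
        ext x; simp [hf.continuousAt]
      rw [this, closure_empty]
      exact hPe
end

section
/- Suppose P contains all singleton subsets of X. A nonzero ideal I of C(X)_P is a minimal ideal if and only if I is the principal ideal generated by the characteristic function χ_{α} of some singleton {α} ⊆ X. -/
open Set Topology Filter

theorem stmt17 {X : Type*} [TopologicalSpace X] [T1Space X]
    (P : Set (Set X))
    (hPc : ∀ A ∈ P, IsClosed A)
    (hPu : ∀ A ∈ P, ∀ B ∈ P, A ∪ B ∈ P)
    (hPs : ∀ A ∈ P, ∀ B ⊆ A, IsClosed B → B ∈ P)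
    (hPe : (∅ : Set X) ∈ P)
    (hsingle : ∀ x : X, ({x} : Set X) ∈ P)
    (S : Subring (X → ℝ))
    (hS : ∀ f : X → ℝ, f ∈ S ↔ closure {x | ¬ ContinuousAt f x} ∈ P)
    (I : Ideal S) (hI : I ≠ ⊥) :
    IsAtom I ↔ ∃ (α : X) (e : S),
      (e : X → ℝ) = Set.indicator ({α} : Set X) (fun _ => (1 : ℝ)) ∧
      I = Ideal.span {e} := by
  classical
  -- constants are in S
  have hconst : ∀ c : ℝ, (fun _ : X => c) ∈ S := by
    intro c
    rw [hS]
    have h0 : {x : X | ¬ ContinuousAt (fun _ : X => c) x} = ∅ := by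
      ext x; simp [continuousAt_const]
    rw [h0, closure_empty]; exact hPe
  -- indicators of singletons are in S
  have hind : ∀ α : X, Set.indicator ({α} : Set X) (fun _ => (1:ℝ)) ∈ S := by
    intro α
    rw [hS]
    refine hPs {α} (hsingle α) _ ?_ isClosed_closure
    have hsub : {x : X | ¬ ContinuousAt (Set.indicator ({α}:Set X) (fun _ => (1:ℝ))) x} ⊆ {α} := by
      intro x hx
      by_contra hxa
      apply hx
      have hopen : IsOpen (({α} : Set X)ᶜ) := isClosed_singleton.isOpen_compl
      have hev : Set.indicator ({α}:Set X) (fun _ => (1:ℝ)) =ᶠ[𝓝 x] fun _ => (0:ℝ) := by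
        filter_upwards [hopen.mem_nhds (by simpa using hxa)] with y hy
        exact Set.indicator_of_notMem hy _
      exact hev.continuousAt
    exact closure_minimal hsub isClosed_singleton
  -- key pointwise value
  have hval : ∀ (α x : X), Set.indicator ({α} : Set X) (fun _ => (1:ℝ)) x
      = if x = α then 1 else 0 := by
    intro α x
    by_cases h : x = α <;> simp [Set.indicator_apply, h]
  constructor
  · intro hatom
    obtain ⟨f, hfI, hf0⟩ := Submodule.exists_mem_ne_zero_of_ne_bot hI
    have hfun : (f : X → ℝ) ≠ 0 := by
      intro h; apply hf0; exact Subtype.ext h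
    obtain ⟨α, hα⟩ := Function.ne_iff.mp hfun
    have hα : (f : X → ℝ) α ≠ 0 := hα
    set e : S := ⟨Set.indicator ({α} : Set X) (fun _ => (1:ℝ)), hind α⟩ with he
    have heI : e ∈ I := by
      have : e = (⟨fun _ => ((f : X → ℝ) α)⁻¹, hconst _⟩ * e) * f := by
        apply Subtype.ext
        funext x
        show Set.indicator ({α} : Set X) (fun _ => (1:ℝ)) x
          = ((f : X → ℝ) α)⁻¹ * Set.indicator ({α} : Set X) (fun _ => (1:ℝ)) x * (f : X → ℝ) x
        rw [hval]
        by_cases h : x = α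
        · simp [h, inv_mul_cancel₀ hα, mul_comm]
        · simp [h]
      rw [this]
      exact I.mul_mem_left _ hfI
    refine ⟨α, e, rfl, ?_⟩
    have hle : Ideal.span {e} ≤ I := by
      rwa [Ideal.span_singleton_le_iff_mem]
    have hne : Ideal.span {e} ≠ ⊥ := by
      intro h
      have : e = 0 := by
        have := Ideal.mem_span_singleton_self e
        rw [h] at this
        simpa using this
      have := congrArg (fun g : S => (g : X → ℝ) α) this
      simp [he, hval] at this
    rcases lt_or_eq_of_le hle with h | h
    · exact absurd (hatom.2 _ h) hne
    · exact h.symm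
  · rintro ⟨α, e, hef, hIe⟩
    constructor
    · exact hI
    · intro J hJ
      by_contra hJ0
      obtain ⟨g, hgJ, hg0⟩ := Submodule.exists_mem_ne_zero_of_ne_bot hJ0
      have hgI : g ∈ I := le_of_lt hJ hgJ
      rw [hIe, Ideal.mem_span_singleton'] at hgI
      obtain ⟨s, hs⟩ := hgI
      have hgfun : (g : X → ℝ) = fun x => (s : X → ℝ) x * (e : X → ℝ) x := by
        rw [← hs]; rfl
      have hsα : (s : X → ℝ) α ≠ 0 := by
        intro h
        apply hg0
        apply Subtype.ext
        funext x
        rw [hgfun]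
        show (s : X → ℝ) x * (e : X → ℝ) x = 0
        rw [hef, hval]
        by_cases hx : x = α
        · simp [hx, h]
        · simp [hx]
      have heJ : e ∈ J := by
        have : e = ⟨fun _ => ((s : X → ℝ) α)⁻¹, hconst _⟩ * g := by
          apply Subtype.ext
          funext x
          show (e : X → ℝ) x = ((s : X → ℝ) α)⁻¹ * (g : X → ℝ) x
          rw [hgfun, hef, hval]
          by_cases hx : x = α
          · simp [hx, hval, inv_mul_cancel₀ hsα]
          · simp [hx, hval]
        rw [this]
        exact J.mul_mem_left _ hgJ
      have : I ≤ J := by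
        rw [hIe, Ideal.span_singleton_le_iff_mem]
        exact heJ
      exact absurd (lt_of_lt_of_le hJ this) (lt_irrefl _)
end

section
/- Suppose P contains all singleton subsets of X. Then the sum of all minimal ideals of C(X)_P (the socle) equals the set of functions in C(X)_P that vanish everywhere except on a finite set, and this ideal is essential (has nonzero intersection with every nonzero ideal) and free (the intersection of zero sets of its members is empty). -/
open Set Topology Filter

theorem stmt18 {X : Type*} [TopologicalSpace X] [T1Space X]
    (P : Set (Set X))
    (hPc : ∀ A ∈ P, IsClosed A)
    (hPu : ∀ A ∈ P, ∀ B ∈ P, A ∪ B ∈ P)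
    (hPs : ∀ A ∈ P, ∀ B ⊆ A, IsClosed B → B ∈ P)
    (hPe : (∅ : Set X) ∈ P)
    (hsingle : ∀ x : X, ({x} : Set X) ∈ P)
    (S : Subring (X → ℝ))
    (hS : ∀ f : X → ℝ, f ∈ S ↔ closure {x | ¬ ContinuousAt f x} ∈ P)
    :
    (∀ f : S, f ∈ sSup {I : Ideal S | IsAtom I} ↔ {x | (f : X → ℝ) x ≠ 0}.Finite) ∧
    (∀ I : Ideal S, I ≠ ⊥ → sSup {I : Ideal S | IsAtom I} ⊓ I ≠ ⊥) ∧
    (∀ x : X, ∃ f : S, f ∈ sSup {I : Ideal S | IsAtom I} ∧ (f : X → ℝ) x ≠ 0) := by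
  classical
  -- finite sets are in P
  have hPfin : ∀ A : Set X, A.Finite → A ∈ P := by
    intro A hA
    refine Set.Finite.induction_on A hA hPe ?_
    intro a s _ _ ih
    rw [Set.insert_eq]
    exact hPu _ (hsingle a) _ ih
  -- functions with finite support are in S
  have hmemS : ∀ f : X → ℝ, ({x | f x ≠ 0}).Finite → f ∈ S := by
    intro f hf
    rw [hS]
    have hcl : IsClosed {x | f x ≠ 0} := hf.isClosed
    have hsub : {x | ¬ ContinuousAt f x} ⊆ {x | f x ≠ 0} := by
      intro y hy
      by_contra h
      simp only [mem_setOf_eq, not_not] at h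
      apply hy
      have hmem : {x | f x ≠ 0}ᶜ ∈ 𝓝 y :=
        hcl.isOpen_compl.mem_nhds (by simpa using h)
      have heq : f =ᶠ[𝓝 y] fun _ => (0 : ℝ) := by
        filter_upwards [hmem] with z hz
        simpa using hz
      exact heq.continuousAt
    exact hPs _ (hPfin _ hf) _ (closure_minimal hsub hcl) isClosed_closure
  -- the characteristic functions
  set χ : X → X → ℝ := fun x y => if y = x then 1 else 0 with hχ
  have hχS : ∀ x, χ x ∈ S := by
    intro x
    apply hmemS
    apply (Set.finite_singleton x).subset
    intro y hy
    simp only [mem_setOf_eq, hχ] at hy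
    by_contra h
    simp only [mem_singleton_iff] at h
    simp [h] at hy
  set e : X → S := fun x => ⟨χ x, hχS x⟩ with he
  have heval : ∀ x y : X, (e x : X → ℝ) y = if y = x then 1 else 0 := fun x y => rfl
  have hmul : ∀ (x : X) (f : S) (y : X),
      ((e x * f : S) : X → ℝ) y = if y = x then (f : X → ℝ) x else 0 := by
    intro x f y
    show (χ x y) * (f : X → ℝ) y = _
    by_cases h : y = x <;> simp [hχ, h]
  -- membership in span {e x}
  have hspan : ∀ (x : X) (f : S),
      f ∈ Ideal.span {e x} ↔ ∀ y, y ≠ x → (f : X → ℝ) y = 0 := by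
    intro x f
    rw [Ideal.mem_span_singleton]
    constructor
    · rintro ⟨c, rfl⟩ y hy
      show (χ x y) * (c : X → ℝ) y = 0
      simp [hχ, hy]
    · intro h
      refine ⟨f, ?_⟩
      apply Subtype.ext
      funext y
      by_cases hy : y = x
      · show (f : X → ℝ) y = χ x y * (f : X → ℝ) y
        simp [hχ, hy]
      · show (f : X → ℝ) y = χ x y * (f : X → ℝ) y
        simp [hχ, hy, h y hy]
  -- nonzero elements have a nonzero value
  have hne : ∀ f : S, f ≠ 0 → ∃ x, (f : X → ℝ) x ≠ 0 := by
    intro f hf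
    by_contra h
    push_neg at h
    exact hf (Subtype.ext (funext h))
  -- constants are in S
  have hconst : ∀ c : ℝ, (fun _ : X => c) ∈ S := by
    intro c
    rw [hS]
    have h0 : {x : X | ¬ ContinuousAt (fun _ => c) x} = ∅ := by
      ext x; simp [continuousAt_const]
    rw [h0, closure_empty]; exact hPe
  -- each span {e x} is an atom
  have hatom : ∀ x : X, IsAtom (Ideal.span {e x}) := by
    intro x
    constructor
    · intro hbot
      have h1 : e x ∈ Ideal.span {e x} := Ideal.subset_span rfl
      rw [hbot] at h1
      have h2 : e x = 0 := by simpa using h1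
      have h3 := congrFun (congrArg Subtype.val h2) x
      rw [heval] at h3
      simp at h3
    · intro J hJ
      by_contra hJbot
      obtain ⟨f, hfJ, hf0⟩ := (Submodule.ne_bot_iff J).mp hJbot
      have hfs : ∀ y, y ≠ x → (f : X → ℝ) y = 0 := (hspan x f).mp (hJ.le hfJ)
      have hfx : (f : X → ℝ) x ≠ 0 := by
        intro h
        apply hf0
        apply Subtype.ext
        funext y
        by_cases hy : y = x
        · rw [hy]; exact h
        · exact hfs y hy
      set g : S := ⟨fun _ => ((f : X → ℝ) x)⁻¹, hconst _⟩ with hg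
      have hgf : g * f = e x := by
        apply Subtype.ext
        funext y
        show ((f : X → ℝ) x)⁻¹ * (f : X → ℝ) y = χ x y
        by_cases hy : y = x
        · subst hy; simp [hχ, inv_mul_cancel₀ hfx]
        · simp [hχ, hy, hfs y hy]
      have hexJ : e x ∈ J := hgf ▸ Ideal.mul_mem_left J g hfJ
      exact hJ.not_ge (Ideal.span_le.mpr (Set.singleton_subset_iff.mpr hexJ))
  set Soc := sSup {I : Ideal S | IsAtom I} with hSoc
  -- the ideal of finite support functions
  let T : Ideal S :=
    { carrier := {f : S | {x | (f : X → ℝ) x ≠ 0}.Finite}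
      add_mem' := by
        intro a b ha hb
        refine (ha.union hb).subset ?_
        intro y hy
        simp only [mem_setOf_eq, mem_union] at hy ⊢
        by_contra h
        push_neg at h
        apply hy
        show (a : X → ℝ) y + (b : X → ℝ) y = 0
        rw [h.1, h.2, add_zero]
      zero_mem' := by
        show {x : X | ((0 : S) : X → ℝ) x ≠ 0}.Finite
        have h0 : {x : X | ((0 : S) : X → ℝ) x ≠ 0} = ∅ := by ext y; simp
        rw [h0]; exact Set.finite_empty
      smul_mem' := by
        intro c f hf
        refine hf.subset ?_
        intro y hy
        simp only [mem_setOf_eq] at hy ⊢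
        intro h0
        apply hy
        show (c : X → ℝ) y * (f : X → ℝ) y = 0
        rw [h0, mul_zero] }
  -- every atom is contained in T
  have hatomT : ∀ I : Ideal S, IsAtom I → I ≤ T := by
    intro I hI
    obtain ⟨f, hfI, hf0⟩ := (Submodule.ne_bot_iff I).mp hI.1
    obtain ⟨x, hx⟩ := hne f hf0
    have h1 : e x * f ∈ I := Ideal.mul_mem_left I _ hfI
    have h2 : e x * f ∈ Ideal.span {e x} :=
      (hspan x (e x * f)).mpr (fun y hy => by rw [hmul]; simp [hy])
    have h3 : e x * f ≠ 0 := by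
      intro h
      have h4 := congrFun (congrArg Subtype.val h) x
      rw [hmul] at h4
      simp at h4
      exact hx h4
    have h4 : Ideal.span {e x} ⊓ I ≠ ⊥ := by
      intro h
      have h5 : e x * f ∈ (⊥ : Ideal S) := h ▸ Submodule.mem_inf.mpr ⟨h2, h1⟩
      exact h3 ((Submodule.mem_bot _).mp h5)
    have h5 : Ideal.span {e x} ⊓ I = Ideal.span {e x} := by
      by_contra h
      exact h4 ((hatom x).2 _ (lt_of_le_of_ne inf_le_left h))
    have h6 : Ideal.span {e x} ≤ I := by
      rw [← h5]; exact inf_le_right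
    have h7 : I = Ideal.span {e x} := by
      by_contra h
      exact (hatom x).1 (hI.2 _ (lt_of_le_of_ne h6 (fun hh => h hh.symm)))
    rw [h7]
    intro g hg
    have hgs := (hspan x g).mp hg
    show {y | (g : X → ℝ) y ≠ 0}.Finite
    refine (Set.finite_singleton x).subset ?_
    intro y hy
    simp only [mem_setOf_eq] at hy
    simp only [mem_singleton_iff]
    by_contra h
    exact hy (hgs y h)
  have hSocT : Soc ≤ T := sSup_le hatomT
  -- finite support functions are in Soc
  have hfi : ∀ f : S, {x | (f : X → ℝ) x ≠ 0}.Finite → f ∈ Soc := by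
    intro f hf
    have key : f = ∑ x ∈ hf.toFinset, e x * f := by
      apply Subtype.ext
      funext y
      have hsum : ((∑ x ∈ hf.toFinset, e x * f : S) : X → ℝ) y
          = ∑ x ∈ hf.toFinset, ((e x * f : S) : X → ℝ) y := by
        rw [AddSubmonoidClass.coe_finset_sum, Finset.sum_apply]
      rw [hsum]
      simp_rw [hmul]
      rw [Finset.sum_ite_eq]
      by_cases hy : y ∈ hf.toFinset
      · simp [hy]
      · rw [if_neg hy]
        rw [Set.Finite.mem_toFinset] at hy
        simp only [mem_setOf_eq, not_not] at hy
        exact hy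
    rw [key]
    apply Ideal.sum_mem
    intro x _
    have hle : Ideal.span {e x} ≤ Soc := le_sSup (hatom x)
    exact hle ((hspan x (e x * f)).mpr (fun y hy => by rw [hmul]; simp [hy]))
  refine ⟨fun f => ⟨fun h => hSocT h, hfi f⟩, ?_, ?_⟩
  · intro I hI hbot
    obtain ⟨f, hfI, hf0⟩ := (Submodule.ne_bot_iff I).mp hI
    obtain ⟨x, hx⟩ := hne f hf0
    have hle : Ideal.span {e x} ≤ Soc := le_sSup (hatom x)
    have h1 : e x * f ∈ Soc :=
      hle ((hspan x (e x * f)).mpr (fun y hy => by rw [hmul]; simp [hy]))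
    have h2 : e x * f ∈ Soc ⊓ I := Submodule.mem_inf.mpr ⟨h1, Ideal.mul_mem_left I _ hfI⟩
    rw [hbot] at h2
    have h3 : e x * f = 0 := (Submodule.mem_bot _).mp h2
    have h4 := congrFun (congrArg Subtype.val h3) x
    rw [hmul] at h4
    simp at h4
    exact hx h4
  · intro x
    have hle : Ideal.span {e x} ≤ Soc := le_sSup (hatom x)
    refine ⟨e x, hle (Ideal.subset_span rfl), ?_⟩
    rw [heval]
    simp
end

section
/- Suppose P contains all singleton subsets of X. Then C(X)_P is a Noetherian ring if and only if X is finite. -/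
open Set Topology Filter

/-- auxiliary ideal: elements of `S` vanishing outside `{e 0, ..., e (n-1)}`. -/
def stmt19Ideal {X : Type*} (S : Subring (X → ℝ)) (e : ℕ → X) (n : ℕ) :
    Submodule S S where
  carrier := {f | ∀ x : X, (∀ i < n, x ≠ e i) → (f : X → ℝ) x = 0}
  add_mem' := by
    intro f g hf hg x hx
    show (f : X → ℝ) x + (g : X → ℝ) x = 0
    rw [hf x hx, hg x hx, add_zero]
  zero_mem' := by intro x _; rfl
  smul_mem' := by
    intro r f hf x hx
    show (r : X → ℝ) x * (f : X → ℝ) x = 0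
    rw [hf x hx, mul_zero]

theorem stmt19Ideal_mem {X : Type*} (S : Subring (X → ℝ)) (e : ℕ → X) (n : ℕ) (f : S) :
    f ∈ stmt19Ideal S e n ↔ ∀ x : X, (∀ i < n, x ≠ e i) → (f : X → ℝ) x = 0 :=
  Iff.rfl

theorem stmt19 {X : Type*} [TopologicalSpace X] [T1Space X]
    (P : Set (Set X))
    (hPc : ∀ A ∈ P, IsClosed A)
    (hPu : ∀ A ∈ P, ∀ B ∈ P, A ∪ B ∈ P)
    (hPs : ∀ A ∈ P, ∀ B ⊆ A, IsClosed B → B ∈ P)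
    (hPe : (∅ : Set X) ∈ P)
    (hsingle : ∀ x : X, ({x} : Set X) ∈ P)
    (S : Subring (X → ℝ))
    (hS : ∀ f : X → ℝ, f ∈ S ↔ closure {x | ¬ ContinuousAt f x} ∈ P)
    :
    IsNoetherianRing S ↔ Finite X := by
  -- finite sets belong to P
  have hfinP : ∀ F : Set X, F.Finite → F ∈ P := by
    intro F hF
    refine Set.Finite.induction_on F hF hPe ?_
    intro a s _ _ ih
    rw [Set.insert_eq]
    exact hPu _ (hsingle _) _ ih
  -- indicator functions of finite sets belong to S
  have hind : ∀ F : Set X, F.Finite →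
      (F.indicator (fun _ => (1 : ℝ))) ∈ S := by
    intro F hF
    rw [hS]
    have hsub : {x | ¬ ContinuousAt (F.indicator (fun _ => (1 : ℝ))) x} ⊆ F := by
      intro y hy
      by_contra hyF
      apply hy
      have hev : F.indicator (fun _ => (1 : ℝ)) =ᶠ[𝓝 y] fun _ => (0 : ℝ) := by
        filter_upwards [hF.isClosed.isOpen_compl.mem_nhds hyF] with z hz
        simp [Set.indicator_of_notMem hz]
      exact hev.continuousAt
    have hcl : closure {x | ¬ ContinuousAt (F.indicator (fun _ => (1 : ℝ))) x} ⊆ F :=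
      (closure_minimal hsub hF.isClosed)
    exact hPs F (hfinP F hF) _ hcl isClosed_closure
  constructor
  · intro hN
    by_contra hinf
    rw [not_finite_iff_infinite] at hinf
    obtain ⟨e, he⟩ := Infinite.natEmbedding X
    -- the chain of ideals
    have hmono : Monotone (stmt19Ideal S e) := by
      intro n m hnm f hf x hx
      exact hf x fun i hi => hx i (lt_of_lt_of_le hi hnm)
    obtain ⟨n, hn⟩ := monotone_stabilizes_iff_noetherian.mpr hN ⟨stmt19Ideal S e, hmono⟩
    have hstab : stmt19Ideal S e n = stmt19Ideal S e (n + 1) := hn (n + 1) (Nat.le_succ n)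
    -- the indicator of {e n} is in chain (n+1) but not in chain n
    set g : X → ℝ := ({e n} : Set X).indicator (fun _ => (1 : ℝ)) with hg
    have hgS : g ∈ S := hind _ (Set.finite_singleton _)
    have hmem : (⟨g, hgS⟩ : S) ∈ stmt19Ideal S e (n + 1) := by
      rw [stmt19Ideal_mem]
      intro x hx
      have : x ∉ ({e n} : Set X) := by
        simp only [Set.mem_singleton_iff]
        exact hx n (Nat.lt_succ_self n)
      simp [hg, Set.indicator_of_notMem this]
    have hmem' : (⟨g, hgS⟩ : S) ∈ stmt19Ideal S e n := by
      rw [hstab]; exact hmem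
    have := (stmt19Ideal_mem S e n _).mp hmem' (e n) (by
      intro i hi hcontra
      exact (Nat.ne_of_lt hi) (he hcontra).symm)
    simp [hg, Set.indicator_of_mem] at this
  · intro hfin
    -- every function is in S, so S = ⊤
    have hStop : S = ⊤ := by
      rw [eq_top_iff]
      intro f _
      rw [hS]
      exact hPs _ (hfinP Set.univ Set.finite_univ) _ (Set.subset_univ _) isClosed_closure
    have h1 : IsNoetherianRing (X → ℝ) := by
      have h2 : IsNoetherian ℝ (X → ℝ) := inferInstance
      exact isNoetherian_of_tower ℝ h2
    exact isNoetherianRing_of_ringEquiv (X → ℝ)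
      ((RingEquiv.subringCongr hStop).trans Subring.topEquiv).symm
end
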